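/- arXiv:1503.08834 — 3 statements merged into one kernel-verified Lean document; each statement's English description precedes it below -/
import Mathlib

section
/- The second fundamental form of Scherk's second surface with parameter λ̃ ∈ [0,1] and scale c > 0 (with a the angular frequency) has components K_ρρ = −√(1−λ̃²)/c, K_ρφ = −a λ̃, K_φφ = a² c √(1−λ̃²). In particular the mean curvature γ^ij K_ij vanishes since γ_ρρ = cosh²(ρ/c) and γ_φφ = a²c² cosh²(ρ/c). -/
noncomputable section
open Real

/-- Partial derivative in the first variable. -/
def dR (g : ℝ → ℝ → ℝ) (ρ θ : ℝ) : ℝ := deriv (fun r => g r θ) ρ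

/-- Partial derivative in the second variable. -/
def dT (g : ℝ → ℝ → ℝ) (ρ θ : ℝ) : ℝ := deriv (fun t => g ρ t) θ

/-- First component of the cross product `∂_ρX × ∂_θX` for the surface with
component functions `(f,g,h)`. -/
def cr1 (f g h : ℝ → ℝ → ℝ) (ρ θ : ℝ) : ℝ :=
  dR g ρ θ * dT h ρ θ - dR h ρ θ * dT g ρ θ

def cr2 (f g h : ℝ → ℝ → ℝ) (ρ θ : ℝ) : ℝ :=
  dR h ρ θ * dT f ρ θ - dR f ρ θ * dT h ρ θ

def cr3 (f g h : ℝ → ℝ → ℝ) (ρ θ : ℝ) : ℝ :=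
  dR f ρ θ * dT g ρ θ - dR g ρ θ * dT f ρ θ

/-- Norm of `∂_ρX × ∂_θX`. -/
def nrm (f g h : ℝ → ℝ → ℝ) (ρ θ : ℝ) : ℝ :=
  Real.sqrt ((cr1 f g h ρ θ) ^ 2 + (cr2 f g h ρ θ) ^ 2 + (cr3 f g h ρ θ) ^ 2)

/-- Second fundamental form component `K_ρρ = ⟨n, ∂_ρ∂_ρ X⟩` with `n` the unit
normal obtained by normalizing `∂_ρX × ∂_θX`. -/
def Krr (f g h : ℝ → ℝ → ℝ) (ρ θ : ℝ) : ℝ :=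
  (cr1 f g h ρ θ * dR (dR f) ρ θ + cr2 f g h ρ θ * dR (dR g) ρ θ +
      cr3 f g h ρ θ * dR (dR h) ρ θ) / nrm f g h ρ θ

/-- `K_ρθ = ⟨n, ∂_ρ∂_θ X⟩`. -/
def Krt (f g h : ℝ → ℝ → ℝ) (ρ θ : ℝ) : ℝ :=
  (cr1 f g h ρ θ * dT (dR f) ρ θ + cr2 f g h ρ θ * dT (dR g) ρ θ +
      cr3 f g h ρ θ * dT (dR h) ρ θ) / nrm f g h ρ θ

/-- `K_θθ = ⟨n, ∂_θ∂_θ X⟩`. -/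
def Ktt (f g h : ℝ → ℝ → ℝ) (ρ θ : ℝ) : ℝ :=
  (cr1 f g h ρ θ * dT (dT f) ρ θ + cr2 f g h ρ θ * dT (dT g) ρ θ +
      cr3 f g h ρ θ * dT (dT h) ρ θ) / nrm f g h ρ θ

/-- Induced metric component `γ_ρρ`. -/
def gRR (f g h : ℝ → ℝ → ℝ) (ρ θ : ℝ) : ℝ :=
  (dR f ρ θ) ^ 2 + (dR g ρ θ) ^ 2 + (dR h ρ θ) ^ 2

/-- Induced metric component `γ_ρθ`. -/
def gRT (f g h : ℝ → ℝ → ℝ) (ρ θ : ℝ) : ℝ :=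
  dR f ρ θ * dT f ρ θ + dR g ρ θ * dT g ρ θ + dR h ρ θ * dT h ρ θ

/-- Induced metric component `γ_θθ`. -/
def gTT (f g h : ℝ → ℝ → ℝ) (ρ θ : ℝ) : ℝ :=
  (dT f ρ θ) ^ 2 + (dT g ρ θ) ^ 2 + (dT h ρ θ) ^ 2

/-- Mean curvature `H = γ^{ij} K_{ij}`. -/
def meanH (f g h : ℝ → ℝ → ℝ) (ρ θ : ℝ) : ℝ :=
  (gTT f g h ρ θ * Krr f g h ρ θ - 2 * gRT f g h ρ θ * Krt f g h ρ θ +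
      gRR f g h ρ θ * Ktt f g h ρ θ) /
    (gRR f g h ρ θ * gTT f g h ρ θ - (gRT f g h ρ θ) ^ 2)

private lemma derivR_sc (A B p q c ρ : ℝ) :
    deriv (fun r => A * Real.sinh (r / c) * p + B * Real.cosh (r / c) * q) ρ
      = A / c * Real.cosh (ρ / c) * p + B / c * Real.sinh (ρ / c) * q := by
  have hrc : HasDerivAt (fun r : ℝ => r / c) (1 / c) ρ := (hasDerivAt_id ρ).div_const c
  have h : HasDerivAt (fun r => A * Real.sinh (r / c) * p + B * Real.cosh (r / c) * q)
      (A * (Real.cosh (ρ / c) * (1 / c)) * p + B * (Real.sinh (ρ / c) * (1 / c)) * q) ρ :=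
    ((hrc.sinh.const_mul A).mul_const p).add ((hrc.cosh.const_mul B).mul_const q)
  rw [h.deriv]; ring

private lemma derivR_cs (A B p q c ρ : ℝ) :
    deriv (fun r => A * Real.cosh (r / c) * p + B * Real.sinh (r / c) * q) ρ
      = A / c * Real.sinh (ρ / c) * p + B / c * Real.cosh (ρ / c) * q := by
  have hrc : HasDerivAt (fun r : ℝ => r / c) (1 / c) ρ := (hasDerivAt_id ρ).div_const c
  have h : HasDerivAt (fun r => A * Real.cosh (r / c) * p + B * Real.sinh (r / c) * q)
      (A * (Real.sinh (ρ / c) * (1 / c)) * p + B * (Real.cosh (ρ / c) * (1 / c)) * q) ρ :=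
    ((hrc.cosh.const_mul A).mul_const p).add ((hrc.sinh.const_mul B).mul_const q)
  rw [h.deriv]; ring

private lemma derivT' (A B a θ : ℝ) :
    deriv (fun t => A * Real.sin (a * t) + B * Real.cos (a * t)) θ
      = A * a * Real.cos (a * θ) - B * a * Real.sin (a * θ) := by
  have hat : HasDerivAt (fun t : ℝ => a * t) (a * 1) θ := (hasDerivAt_id θ).const_mul a
  have h : HasDerivAt (fun t => A * Real.sin (a * t) + B * Real.cos (a * t))
      (A * (Real.cos (a * θ) * (a * 1)) + B * (-Real.sin (a * θ) * (a * 1))) θ :=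
    (hat.sin.const_mul A).add (hat.cos.const_mul B)
  rw [h.deriv]; ring


/-- The second fundamental form of Scherk's second surface with parameter
`λ̃ ∈ [0,1]`, scale `c > 0` and angular frequency `a` has components
`K_ρρ = -√(1-λ̃²)/c`, `K_ρφ = -aλ̃`, `K_φφ = a²c√(1-λ̃²)`; in particular the
mean curvature `γ^{ij}K_{ij}` vanishes, the metric being
`γ_ρρ = cosh²(ρ/c)`, `γ_φφ = a²c² cosh²(ρ/c)`. -/
theorem scherk_second_fundamental_form (lam c a : ℝ)
    (hlam : lam ∈ Set.Icc (0 : ℝ) 1) (hc : 0 < c) (ha : 0 < a) (ρ φ : ℝ) :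
    let s : ℝ := Real.sqrt (1 - lam ^ 2)
    let X1 : ℝ → ℝ → ℝ := fun r t =>
      lam * c * Real.sinh (r / c) * Real.sin (a * t)
        + s * c * Real.cosh (r / c) * Real.cos (a * t)
    let X2 : ℝ → ℝ → ℝ := fun r t =>
      -(lam * c * Real.sinh (r / c) * Real.cos (a * t))
        + s * c * Real.cosh (r / c) * Real.sin (a * t)
    let X3 : ℝ → ℝ → ℝ := fun r t => lam * a * c * t + s * r
    Krr X1 X2 X3 ρ φ = -(s / c) ∧
    Krt X1 X2 X3 ρ φ = -(a * lam) ∧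
    Ktt X1 X2 X3 ρ φ = a ^ 2 * c * s ∧
    gRR X1 X2 X3 ρ φ = (Real.cosh (ρ / c)) ^ 2 ∧
    gTT X1 X2 X3 ρ φ = a ^ 2 * c ^ 2 * (Real.cosh (ρ / c)) ^ 2 ∧
    meanH X1 X2 X3 ρ φ = 0 := by
  intro s X1 X2 X3
  have hc0 : c ≠ 0 := hc.ne'
  have hs2 : s ^ 2 = 1 - lam ^ 2 := Real.sq_sqrt (by nlinarith [hlam.1, hlam.2])
  have hPQ : Real.sin (a * φ) ^ 2 + Real.cos (a * φ) ^ 2 = 1 := Real.sin_sq_add_cos_sq _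
  have hC2 : Real.cosh (ρ / c) ^ 2 = Real.sinh (ρ / c) ^ 2 + 1 := Real.cosh_sq _
  have hCpos : 0 < Real.cosh (ρ / c) := Real.cosh_pos _
  -- first derivatives (at general points)
  have hd1 : ∀ r t : ℝ, dR X1 r t
      = lam * Real.cosh (r / c) * Real.sin (a * t)
        + s * Real.sinh (r / c) * Real.cos (a * t) := by
    intro r t
    simp only [dR, X1]
    rw [derivR_sc]
    field_simp
  have hd2 : ∀ r t : ℝ, dR X2 r t
      = -(lam * Real.cosh (r / c) * Real.cos (a * t))
        + s * Real.sinh (r / c) * Real.sin (a * t) := by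
    intro r t
    simp only [dR, X2]
    have hfun : (fun r => -(lam * c * Real.sinh (r / c) * Real.cos (a * t))
        + s * c * Real.cosh (r / c) * Real.sin (a * t))
        = fun r => (-(lam * c)) * Real.sinh (r / c) * Real.cos (a * t)
          + (s * c) * Real.cosh (r / c) * Real.sin (a * t) := by
      funext r; ring
    rw [hfun, derivR_sc]
    field_simp
    try ring
  have hd3 : ∀ r t : ℝ, dR X3 r t = s := by
    intro r t
    simp only [dR, X3]
    have h : HasDerivAt (fun y : ℝ => lam * a * c * t + s * y) (s * 1) r :=
      ((hasDerivAt_id r).const_mul s).const_add (lam * a * c * t)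
    rw [h.deriv]; ring
  have ht1 : ∀ r t : ℝ, dT X1 r t
      = lam * a * c * Real.sinh (r / c) * Real.cos (a * t)
        - s * a * c * Real.cosh (r / c) * Real.sin (a * t) := by
    intro r t
    simp only [dT, X1]
    rw [derivT']
    ring
  have ht2 : ∀ r t : ℝ, dT X2 r t
      = lam * a * c * Real.sinh (r / c) * Real.sin (a * t)
        + s * a * c * Real.cosh (r / c) * Real.cos (a * t) := by
    intro r t
    simp only [dT, X2]
    have hfun : (fun t => -(lam * c * Real.sinh (r / c) * Real.cos (a * t))
        + s * c * Real.cosh (r / c) * Real.sin (a * t))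
        = fun t => (s * c * Real.cosh (r / c)) * Real.sin (a * t)
          + (-(lam * c * Real.sinh (r / c))) * Real.cos (a * t) := by
      funext t; ring
    rw [hfun, derivT']
    ring
  have ht3 : ∀ r t : ℝ, dT X3 r t = lam * a * c := by
    intro r t
    simp only [dT, X3]
    have h : HasDerivAt (fun y : ℝ => lam * a * c * y + s * r) (lam * a * c * 1) t :=
      ((hasDerivAt_id t).const_mul (lam * a * c)).add_const (s * r)
    rw [h.deriv]; ring
  -- second derivatives at (ρ, φ)
  have hdd1 : dR (dR X1) ρ φ
      = (lam * Real.sinh (ρ / c) * Real.sin (a * φ)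
        + s * Real.cosh (ρ / c) * Real.cos (a * φ)) / c := by
    show deriv (fun r => dR X1 r φ) ρ = _
    rw [show (fun r => dR X1 r φ)
        = fun r => lam * Real.cosh (r / c) * Real.sin (a * φ)
          + s * Real.sinh (r / c) * Real.cos (a * φ) from funext fun r => hd1 r φ]
    rw [derivR_cs]; ring
  have hdd2 : dR (dR X2) ρ φ
      = (-(lam * Real.sinh (ρ / c) * Real.cos (a * φ))
        + s * Real.cosh (ρ / c) * Real.sin (a * φ)) / c := by
    show deriv (fun r => dR X2 r φ) ρ = _
    rw [show (fun r => dR X2 r φ)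
        = fun r => (-lam) * Real.cosh (r / c) * Real.cos (a * φ)
          + s * Real.sinh (r / c) * Real.sin (a * φ) from funext fun r => by
            rw [hd2 r φ]; ring]
    rw [derivR_cs]; ring
  have hdd3 : dR (dR X3) ρ φ = 0 := by
    show deriv (fun r => dR X3 r φ) ρ = _
    rw [show (fun r => dR X3 r φ) = fun _ => s from funext fun r => hd3 r φ]
    exact deriv_const _ _
  have hdt1 : dT (dR X1) ρ φ
      = lam * a * Real.cosh (ρ / c) * Real.cos (a * φ)
        - s * a * Real.sinh (ρ / c) * Real.sin (a * φ) := by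
    show deriv (fun t => dR X1 ρ t) φ = _
    rw [show (fun t => dR X1 ρ t)
        = fun t => (lam * Real.cosh (ρ / c)) * Real.sin (a * t)
          + (s * Real.sinh (ρ / c)) * Real.cos (a * t) from funext fun t => by
            rw [hd1 ρ t]; try ring]
    rw [derivT']; ring
  have hdt2 : dT (dR X2) ρ φ
      = lam * a * Real.cosh (ρ / c) * Real.sin (a * φ)
        + s * a * Real.sinh (ρ / c) * Real.cos (a * φ) := by
    show deriv (fun t => dR X2 ρ t) φ = _
    rw [show (fun t => dR X2 ρ t)
        = fun t => (s * Real.sinh (ρ / c)) * Real.sin (a * t)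
          + (-(lam * Real.cosh (ρ / c))) * Real.cos (a * t) from funext fun t => by
            rw [hd2 ρ t]; try ring]
    rw [derivT']; ring
  have hdt3 : dT (dR X3) ρ φ = 0 := by
    show deriv (fun t => dR X3 ρ t) φ = _
    rw [show (fun t => dR X3 ρ t) = fun _ => s from funext fun t => hd3 ρ t]
    exact deriv_const _ _
  have htt1 : dT (dT X1) ρ φ
      = -(lam * a ^ 2 * c * Real.sinh (ρ / c) * Real.sin (a * φ))
        - s * a ^ 2 * c * Real.cosh (ρ / c) * Real.cos (a * φ) := by
    show deriv (fun t => dT X1 ρ t) φ = _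
    rw [show (fun t => dT X1 ρ t)
        = fun t => (-(s * a * c * Real.cosh (ρ / c))) * Real.sin (a * t)
          + (lam * a * c * Real.sinh (ρ / c)) * Real.cos (a * t) from funext fun t => by
            rw [ht1 ρ t]; try ring]
    rw [derivT']; ring
  have htt2 : dT (dT X2) ρ φ
      = lam * a ^ 2 * c * Real.sinh (ρ / c) * Real.cos (a * φ)
        - s * a ^ 2 * c * Real.cosh (ρ / c) * Real.sin (a * φ) := by
    show deriv (fun t => dT X2 ρ t) φ = _
    rw [show (fun t => dT X2 ρ t)
        = fun t => (lam * a * c * Real.sinh (ρ / c)) * Real.sin (a * t)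
          + (s * a * c * Real.cosh (ρ / c)) * Real.cos (a * t) from funext fun t => by
            rw [ht2 ρ t]; try ring]
    rw [derivT']; ring
  have htt3 : dT (dT X3) ρ φ = 0 := by
    show deriv (fun t => dT X3 ρ t) φ = _
    rw [show (fun t => dT X3 ρ t) = fun _ => lam * a * c from funext fun t => ht3 ρ t]
    exact deriv_const _ _
  -- cross product
  have e1 : cr1 X1 X2 X3 ρ φ = -(a * c * Real.cosh (ρ / c) * Real.cos (a * φ)) := by
    simp only [cr1]
    rw [hd2 ρ φ, hd3 ρ φ, ht2 ρ φ, ht3 ρ φ]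
    linear_combination (-(a * c * Real.cosh (ρ / c) * Real.cos (a * φ))) * hs2
  have e2 : cr2 X1 X2 X3 ρ φ = -(a * c * Real.cosh (ρ / c) * Real.sin (a * φ)) := by
    simp only [cr2]
    rw [hd1 ρ φ, hd3 ρ φ, ht1 ρ φ, ht3 ρ φ]
    linear_combination (-(a * c * Real.cosh (ρ / c) * Real.sin (a * φ))) * hs2
  have e3 : cr3 X1 X2 X3 ρ φ = a * c * Real.cosh (ρ / c) * Real.sinh (ρ / c) := by
    simp only [cr3]
    rw [hd1 ρ φ, hd2 ρ φ, ht1 ρ φ, ht2 ρ φ]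
    linear_combination (a * c * Real.cosh (ρ / c) * Real.sinh (ρ / c)) * hPQ
      + (a * c * Real.cosh (ρ / c) * Real.sinh (ρ / c)
          * (Real.sin (a * φ) ^ 2 + Real.cos (a * φ) ^ 2)) * hs2
  have hn : nrm X1 X2 X3 ρ φ = a * c * Real.cosh (ρ / c) ^ 2 := by
    simp only [nrm]
    rw [e1, e2, e3]
    rw [show (-(a * c * Real.cosh (ρ / c) * Real.cos (a * φ))) ^ 2
        + (-(a * c * Real.cosh (ρ / c) * Real.sin (a * φ))) ^ 2
        + (a * c * Real.cosh (ρ / c) * Real.sinh (ρ / c)) ^ 2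
        = (a * c * Real.cosh (ρ / c) ^ 2) ^ 2 from by
      linear_combination (a ^ 2 * c ^ 2 * Real.cosh (ρ / c) ^ 2) * hPQ
        - (a ^ 2 * c ^ 2 * Real.cosh (ρ / c) ^ 2) * hC2]
    exact Real.sqrt_sq (by positivity)
  -- the fundamental form components
  have hKrr : Krr X1 X2 X3 ρ φ = -(s / c) := by
    simp only [Krr]
    rw [e1, e2, e3, hdd1, hdd2, hdd3, hn]
    field_simp
    linear_combination (-(Real.cosh (ρ / c) * s)) * hPQ
  have hKrt : Krt X1 X2 X3 ρ φ = -(a * lam) := by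
    simp only [Krt]
    rw [e1, e2, e3, hdt1, hdt2, hdt3, hn]
    field_simp
    linear_combination (-(a * Real.cosh (ρ / c) * lam)) * hPQ
  have hKtt : Ktt X1 X2 X3 ρ φ = a ^ 2 * c * s := by
    simp only [Ktt]
    rw [e1, e2, e3, htt1, htt2, htt3, hn]
    field_simp
    linear_combination (a ^ 2 * c * Real.cosh (ρ / c) * s) * hPQ
  have hgRR : gRR X1 X2 X3 ρ φ = Real.cosh (ρ / c) ^ 2 := by
    simp only [gRR]
    rw [hd1 ρ φ, hd2 ρ φ, hd3 ρ φ]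
    linear_combination (lam ^ 2 * Real.cosh (ρ / c) ^ 2
        + s ^ 2 * Real.sinh (ρ / c) ^ 2) * hPQ
      + (Real.sinh (ρ / c) ^ 2 + 1) * hs2 + (lam ^ 2 - 1) * hC2
  have hgRT : gRT X1 X2 X3 ρ φ = 0 := by
    simp only [gRT]
    rw [hd1 ρ φ, hd2 ρ φ, hd3 ρ φ, ht1 ρ φ, ht2 ρ φ, ht3 ρ φ]
    linear_combination (a * c * lam * s
        * (Real.sinh (ρ / c) ^ 2 - Real.cosh (ρ / c) ^ 2)) * hPQ
      + (-(a * c * lam * s)) * hC2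
  have hgTT : gTT X1 X2 X3 ρ φ = a ^ 2 * c ^ 2 * Real.cosh (ρ / c) ^ 2 := by
    simp only [gTT]
    rw [ht1 ρ φ, ht2 ρ φ, ht3 ρ φ]
    linear_combination (a ^ 2 * c ^ 2 * (lam ^ 2 * Real.sinh (ρ / c) ^ 2
        + s ^ 2 * Real.cosh (ρ / c) ^ 2)) * hPQ
      + (a ^ 2 * c ^ 2 * Real.cosh (ρ / c) ^ 2) * hs2
      + (-(a ^ 2 * c ^ 2 * lam ^ 2)) * hC2
  refine ⟨hKrr, hKrt, hKtt, hgRR, hgTT, ?_⟩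
  simp only [meanH]
  rw [hKrr, hKrt, hKtt, hgRR, hgRT, hgTT]
  rw [div_eq_zero_iff]
  left
  field_simp
  ring
end
end

section
/- For the rotating catenoid in a plane wave background with A₁ = A₂ = A (so the worldvolume norm is 𝐤² = R₀² − c²Ω²cosh²(ρ/c) with R₀² = 1 + A c² cosh²(ρ/c)), for n ≥ 1 and Ω ≠ 0 there is no real A for which the Type I equilibrium expression c²A cosh²(ρ/c)((n−1)A + (n+1)Ω²) + (nΩ² − (n+1)A) vanishes identically in ρ; that is, the Type I equilibrium equation has no solution valid for all ρ. -/
noncomputable section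
open Real

/-- The Type I equilibrium equation for a rotating catenoid in a plane wave
background,
`c²A cosh²(ρ/c)((n-1)A + (n+1)Ω²) + (nΩ² - (n+1)A) = 0`,
cannot hold identically in `ρ` for any real `A`, when `n ≥ 1`, `c > 0` and
`Ω ≠ 0`: the catenoid does not solve the Type I blackfold equations. -/
theorem catenoid_no_typeI_solution (n : ℕ) (hn : 1 ≤ n) (c Ω : ℝ)
    (hc : 0 < c) (hΩ : Ω ≠ 0) (A : ℝ) :
    ¬ (∀ ρ : ℝ,
      c ^ 2 * A * (Real.cosh (ρ / c)) ^ 2 * (((n : ℝ) - 1) * A + ((n : ℝ) + 1) * Ω ^ 2)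
        + ((n : ℝ) * Ω ^ 2 - ((n : ℝ) + 1) * A) = 0) := by
  intro h
  have h0 := h 0
  have h1 := h c
  rw [zero_div, Real.cosh_zero] at h0
  rw [div_self hc.ne'] at h1
  have hcosh : 1 < Real.cosh 1 := Real.one_lt_cosh.mpr one_ne_zero
  have hn1 : (1:ℝ) ≤ (n:ℝ) := by exact_mod_cast hn
  have hΩ2 : 0 < Ω ^ 2 := pow_pos (abs_pos.mpr hΩ) 2 |>.trans_le (by rw [sq_abs])
  -- subtract
  have hAB : A * (((n : ℝ) - 1) * A + ((n : ℝ) + 1) * Ω ^ 2) = 0 := by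
    have hsub : c ^ 2 * A * ((Real.cosh 1) ^ 2 - 1) *
        (((n : ℝ) - 1) * A + ((n : ℝ) + 1) * Ω ^ 2) = 0 := by nlinarith [h0, h1]
    have hc2 : (0:ℝ) < c ^ 2 := by positivity
    have hco : (0:ℝ) < (Real.cosh 1) ^ 2 - 1 := by nlinarith
    have key : (c ^ 2 * ((Real.cosh 1) ^ 2 - 1)) *
        (A * (((n : ℝ) - 1) * A + ((n : ℝ) + 1) * Ω ^ 2)) = 0 := by
      linear_combination hsub
    rcases mul_eq_zero.mp key with h' | h'
    · exact absurd h' (mul_pos hc2 hco).ne'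
    · exact h'
  have hconst : (n : ℝ) * Ω ^ 2 - ((n : ℝ) + 1) * A = 0 := by nlinarith [h0, hAB]
  rcases mul_eq_zero.mp hAB with hA | hB
  · nlinarith
  · have : ((n:ℝ)+1)^2*Ω^2 + ((n:ℝ)-1)*(n:ℝ)*Ω^2 = 0 := by
      linear_combination ((n:ℝ)+1)*hB + ((n:ℝ)-1)*hconst
    nlinarith [mul_nonneg (mul_nonneg (sub_nonneg.mpr hn1) (by linarith : (0:ℝ) ≤ (n:ℝ)))
      hΩ2.le, mul_pos (by positivity : (0:ℝ) < ((n:ℝ)+1)^2) hΩ2]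
end
end

section
/- The static black p-sphere equilibrium: the function G(R) = R^p (1 − R²/L²)^{(n+1)/2} on (0, L), arising as the free energy (up to positive constants) with 𝐤 = R₀ = √(1 − R²/L²) and pressure P ∝ −𝐤ⁿ, has its unique critical point at R²/L² = p/(n+p+1) = p/(D−2), where D = n+p+3. -/
noncomputable section
open Real Set

/-- Static black p-sphere equilibrium in de Sitter space: the free energy
`G(R) = R^p (1 - R²/L²)^{(n+1)/2}` on `(0, L)` has its unique critical point
at `R²/L² = p/(n+p+1) = p/(D-2)`, where `D = n+p+3`. -/
theorem static_p_sphere_equilibrium (p n : ℕ) (hp : 1 ≤ p) (hn : 1 ≤ n)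
    (L : ℝ) (hL : 0 < L) (D : ℕ) (hD : D = n + p + 3) :
    let G : ℝ → ℝ := fun R => R ^ p * (1 - R ^ 2 / L ^ 2) ^ (((n : ℝ) + 1) / 2)
    (∀ R ∈ Ioo (0 : ℝ) L,
      (deriv G R = 0 ↔ R ^ 2 / L ^ 2 = (p : ℝ) / ((n : ℝ) + (p : ℝ) + 1))) ∧
    (p : ℝ) / ((n : ℝ) + (p : ℝ) + 1) = (p : ℝ) / ((D : ℝ) - 2) := by
  intro G
  obtain ⟨k, rfl⟩ : ∃ k, p = k + 1 := ⟨p - 1, (Nat.succ_pred_eq_of_pos hp).symm⟩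
  constructor
  · intro R hR
    obtain ⟨hR0, hRL⟩ := hR
    have hL2 : (0:ℝ) < L ^ 2 := by positivity
    have hRL2 : R ^ 2 < L ^ 2 := by nlinarith
    have hu : (0:ℝ) < 1 - R ^ 2 / L ^ 2 := by
      rw [sub_pos, div_lt_one hL2]; exact hRL2
    set α : ℝ := ((n : ℝ) + 1) / 2 with hα
    have h1 : HasDerivAt (fun x : ℝ => x ^ (k + 1))
        (((k : ℝ) + 1) * R ^ k) R := by
      simpa using hasDerivAt_pow (k + 1) R
    have hu' : HasDerivAt (fun x : ℝ => 1 - x ^ 2 / L ^ 2)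
        (-(2 * R ^ 1 / L ^ 2)) R := by
      simpa using ((hasDerivAt_pow 2 R).div_const (L ^ 2)).const_sub 1
    have h2 : HasDerivAt (fun x : ℝ => (1 - x ^ 2 / L ^ 2) ^ α)
        (α * (1 - R ^ 2 / L ^ 2) ^ (α - 1) * (-(2 * R ^ 1 / L ^ 2))) R := by
      have h := hu'.rpow_const (p := α) (Or.inl hu.ne')
      convert h using 1
      ring
    have hG : HasDerivAt G
        ((((k : ℝ) + 1) * R ^ k) * (1 - R ^ 2 / L ^ 2) ^ α +
          R ^ (k + 1) * (α * (1 - R ^ 2 / L ^ 2) ^ (α - 1) * (-(2 * R ^ 1 / L ^ 2)))) R :=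
      h1.mul h2
    have hsplit : (1 - R ^ 2 / L ^ 2) ^ α
        = (1 - R ^ 2 / L ^ 2) ^ (α - 1) * (1 - R ^ 2 / L ^ 2) := by
      rw [← Real.rpow_add_one hu.ne']
      norm_num
    have key : deriv G R = R ^ k * (1 - R ^ 2 / L ^ 2) ^ (α - 1) *
        (((k : ℝ) + 1) * (1 - R ^ 2 / L ^ 2) - ((n : ℝ) + 1) * (R ^ 2 / L ^ 2)) := by
      rw [hG.deriv, hsplit, hα]
      field_simp
      ring
    have hRk : (0:ℝ) < R ^ k := by positivity
    have hup : (0:ℝ) < (1 - R ^ 2 / L ^ 2) ^ (α - 1) := Real.rpow_pos_of_pos hu _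
    have hden : (0:ℝ) < (n : ℝ) + ((k : ℝ) + 1) + 1 := by positivity
    rw [key]
    constructor
    · intro h
      have h3 : ((k : ℝ) + 1) * (1 - R ^ 2 / L ^ 2) - ((n : ℝ) + 1) * (R ^ 2 / L ^ 2) = 0 := by
        rcases mul_eq_zero.mp h with h' | h'
        · rcases mul_eq_zero.mp h' with h'' | h''
          · exact absurd h'' hRk.ne'
          · exact absurd h'' hup.ne'
        · exact h'
      push_cast
      rw [eq_div_iff hden.ne']
      nlinarith [h3]
    · intro h
      push_cast at h
      rw [eq_div_iff hden.ne'] at h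
      have : ((k : ℝ) + 1) * (1 - R ^ 2 / L ^ 2) - ((n : ℝ) + 1) * (R ^ 2 / L ^ 2) = 0 := by
        nlinarith [h]
      rw [this, mul_zero]
  · subst hD
    push_cast
    ring_nf
end
end
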